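/- Let α ∈ (0,1) ∪ (1,2), let ρ and σ be quantum states on ℂ^d with supp(ρ) = supp(σ), let ν > 0, and let m ≥ 1, t₁,…,t_m ∈ [0,1], w₁,…,w_m > 0 be such that h_m(x) := 1 + (sin(απ)/π)·Σ_{j=1}^m w_j f_{t_j}(x) satisfies |x^{1−α} − h_m(x)| ≤ |1−α|·α·ν·(x−1)²/x for all x > 0. Then |Q_α(ρ‖σ) − D_{h_m}(ρ‖σ)| ≤ |α(1−α)|·ν·(Q₂(ρ‖σ) − 1), where D_{h_m}(ρ‖σ) = 1 + (sin(απ)/π)·Σ_{j=1}^m w_j·D_{f_{t_j}}(ρ‖σ), Q_α(ρ‖σ) = tr[ρ^α σ^{1−α}] (matrix powers by functional calculus on the support), and Q₂(ρ‖σ) = tr[ρ² σ⁺] with σ⁺ the Moore–Penrose pseudo-inverse of σ. -/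

import Mathlib

noncomputable section

namespace QRE

open scoped ComplexOrder

open Matrix

variable {d : ℕ}

/-- The rank-one projector `|u⟩⟨u|` associated with a vector `u ∈ ℂ^d`. -/
def rankOne (u : EuclideanSpace ℂ (Fin d)) : Matrix (Fin d) (Fin d) ℂ :=
  Matrix.of fun i j => u i * (starRingEnd ℂ) (u j)

/-- Functional calculus on the support of a Hermitian matrix: apply `g` to the
positive eigenvalues, and `0` to the rest. -/
def matFun (g : ℝ → ℝ) {A : Matrix (Fin d) (Fin d) ℂ} (hA : A.IsHermitian) :
    Matrix (Fin d) (Fin d) ℂ :=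
  ∑ j, (if 0 < hA.eigenvalues j then (g (hA.eigenvalues j) : ℂ) else 0) •
    rankOne (hA.eigenvectorBasis j)

/-- The orthogonal projection onto the support (column space) of a Hermitian matrix. -/
def suppProj {A : Matrix (Fin d) (Fin d) ℂ} (hA : A.IsHermitian) :
    Matrix (Fin d) (Fin d) ℂ :=
  matFun (fun _ => 1) hA

/-- The standard quantum `f`-divergence (for `supp ρ ⊆ supp σ`, where the `f(0⁺)` term
vanishes): `D_f(ρ‖σ) = Σ_{j : η_j > 0} Σ_{k : μ_k > 0} η_j f(μ_k/η_j) tr[P_j Q_k]`. -/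
def Df (f : ℝ → ℝ) {ρ σ : Matrix (Fin d) (Fin d) ℂ}
    (hρ : ρ.IsHermitian) (hσ : σ.IsHermitian) : ℝ :=
  ∑ j, ∑ k,
    if 0 < hρ.eigenvalues j ∧ 0 < hσ.eigenvalues k then
      hρ.eigenvalues j * f (hσ.eigenvalues k / hρ.eigenvalues j) *
        (Matrix.trace (rankOne (hρ.eigenvectorBasis j) *
          rankOne (hσ.eigenvectorBasis k))).re
    else 0

/-- `f_t(x) = (x-1)/(t(x-1)+1)`. -/
def ft (t x : ℝ) : ℝ := (x - 1) / (t * (x - 1) + 1)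

/-- A quantum state: positive semidefinite with unit trace. -/
def IsState (ρ : Matrix (Fin d) (Fin d) ℂ) : Prop := ρ.PosSemidef ∧ ρ.trace = 1

/-- The Umegaki relative entropy `tr[ρ (log₂ ρ − log₂ σ)]` (logs on the supports). -/
def relEnt {ρ σ : Matrix (Fin d) (Fin d) ℂ} (hρ : ρ.IsHermitian) (hσ : σ.IsHermitian) : ℝ :=
  (Matrix.trace (ρ * (matFun (Real.logb 2) hρ - matFun (Real.logb 2) hσ))).re

/-- `Q_α(ρ‖σ) = tr[ρ^α σ^{1-α}]`, matrix powers by functional calculus on the support. -/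
def Qalpha (α : ℝ) {ρ σ : Matrix (Fin d) (Fin d) ℂ}
    (hρ : ρ.IsHermitian) (hσ : σ.IsHermitian) : ℝ :=
  (Matrix.trace (matFun (fun y => y ^ α) hρ * matFun (fun y => y ^ (1 - α)) hσ)).re

/-- `Q₀(ρ‖σ) = tr[ρ⁰ σ]`. -/
def Qzero {ρ : Matrix (Fin d) (Fin d) ℂ} (hρ : ρ.IsHermitian)
    (σ : Matrix (Fin d) (Fin d) ℂ) : ℝ :=
  (Matrix.trace (suppProj hρ * σ)).re

/-- `Q₂(ρ‖σ) = tr[ρ² σ⁺]`, with `σ⁺` the Moore–Penrose pseudo-inverse of `σ`. -/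
def Qtwo (ρ : Matrix (Fin d) (Fin d) ℂ) {σ : Matrix (Fin d) (Fin d) ℂ}
    (hσ : σ.IsHermitian) : ℝ :=
  (Matrix.trace (ρ * ρ * matFun (fun y => y⁻¹) hσ)).re


/-! Write `ρ = ∑ⱼ ηⱼ Pⱼ`, `σ = ∑ₖ μₖ Qₖ` and `cⱼₖ = tr[Pⱼ Qₖ] = |⟨uⱼ, vₖ⟩|² ≥ 0`. Then `D_f(ρ‖σ)` is
`∑ ηⱼ f(μₖ/ηⱼ) cⱼₖ` over pairs of positive eigenvalues, so it is linear in `f` and monotone in the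
values of `f` on `(0, ∞)`. The traces in question are of the same form: `Q_α = D_{x^{1-α}}` and
`Q₂ = D_{1/x}`. Since the supports agree, `∑_{μₖ > 0} cⱼₖ = ‖uⱼ‖² = 1` whenever `ηⱼ > 0` and vice
versa, whence `D_1 = tr ρ = 1` and `D_x = tr σ = 1`. Therefore `Q_α − D_{h_m} = D_{x^{1-α} − h_m}`
is bounded by `|1−α| α ν D_{(x−1)²/x} = |1−α| α ν (D_x − 2 D_1 + D_{1/x}) = |1−α| α ν (Q₂ − 1)`. -/

open scoped InnerProductSpace

lemma rankOne_eq_vecMulVec (u : EuclideanSpace ℂ (Fin d)) :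
    rankOne u = vecMulVec (⇑u) (star ⇑u) := rfl

lemma rankOne_mul_rankOne (u v : EuclideanSpace ℂ (Fin d)) :
    rankOne u * rankOne v = ⟪u, v⟫_ℂ • vecMulVec (⇑u) (star ⇑v) := by
  rw [rankOne_eq_vecMulVec, rankOne_eq_vecMulVec, vecMulVec_mul_vecMulVec, vecMulVec_smul,
    EuclideanSpace.inner_eq_star_dotProduct, dotProduct_comm]

lemma trace_rankOne_mul (u v : EuclideanSpace ℂ (Fin d)) :
    trace (rankOne u * rankOne v) = ((‖⟪u, v⟫_ℂ‖ ^ 2 : ℝ) : ℂ) := by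
  rw [rankOne_mul_rankOne, trace_smul, trace_vecMulVec, ← EuclideanSpace.inner_eq_star_dotProduct,
    smul_eq_mul, ← inner_conj_symm v u, RCLike.mul_conj]
  norm_cast

lemma re_trace_rankOne_mul (u v : EuclideanSpace ℂ (Fin d)) :
    (trace (rankOne u * rankOne v)).re = ‖⟪u, v⟫_ℂ‖ ^ 2 := by
  rw [trace_rankOne_mul, Complex.ofReal_re]

lemma rankOne_mul_rankOne_of_orthonormal {ι : Type*} [DecidableEq ι]
    {b : ι → EuclideanSpace ℂ (Fin d)} (hb : Orthonormal ℂ b) (j k : ι) :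
    rankOne (b j) * rankOne (b k) = if j = k then rankOne (b j) else 0 := by
  rw [rankOne_mul_rankOne, orthonormal_iff_ite.mp hb]
  split_ifs with h
  · rw [h, one_smul, rankOne_eq_vecMulVec]
  · exact zero_smul _ _

section Spectral

variable {A : Matrix (Fin d) (Fin d) ℂ}

lemma eq_sum_smul_rankOne (hA : A.IsHermitian) :
    A = ∑ j, (hA.eigenvalues j : ℂ) • rankOne (hA.eigenvectorBasis j) := by
  conv_lhs => rw [hA.spectral_theorem]
  ext i l
  simp [mul_apply, diagonal, Matrix.sum_apply, rankOne, mul_comm, mul_assoc]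

lemma mul_self_eq_matFun_sq (hA : A.PosSemidef) :
    A * A = matFun (· ^ 2) hA.1 := by
  have hb := hA.1.eigenvectorBasis.orthonormal
  conv_lhs => rw [eq_sum_smul_rankOne hA.1]
  simp only [Finset.sum_mul_sum, smul_mul_smul_comm, rankOne_mul_rankOne_of_orthonormal hb,
    smul_ite, smul_zero, Finset.sum_ite_eq, Finset.mem_univ, if_true, matFun]
  refine Finset.sum_congr rfl fun j _ => ?_
  rcases (hA.eigenvalues_nonneg j).lt_or_eq with hj | hj
  · simp [hj, sq]
  · simp [← hj]

lemma eigenvectorBasis_mem_range (hA : A.IsHermitian) {j : Fin d}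
    (hj : hA.eigenvalues j ≠ 0) : ⇑(hA.eigenvectorBasis j) ∈ LinearMap.range A.mulVecLin := by
  refine ⟨(hA.eigenvalues j)⁻¹ • ⇑(hA.eigenvectorBasis j), ?_⟩
  rw [mulVecLin_apply, mulVec_smul, hA.mulVec_eigenvectorBasis, smul_smul, inv_mul_cancel₀ hj,
    one_smul]

lemma inner_eq_zero_of_mem_range (hA : A.IsHermitian) {x y : EuclideanSpace ℂ (Fin d)}
    (hx : ⇑x ∈ LinearMap.range A.mulVecLin) (hy : A *ᵥ ⇑y = 0) : ⟪x, y⟫_ℂ = 0 := by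
  obtain ⟨z, hz⟩ := hx
  rw [EuclideanSpace.inner_eq_star_dotProduct, ← hz, mulVecLin_apply, star_mulVec, hA.eq,
    dotProduct_comm, ← dotProduct_mulVec, hy, dotProduct_zero]

end Spectral

lemma sum_ite_norm_inner_sq_eq_one {A B : Matrix (Fin d) (Fin d) ℂ} (hA : A.IsHermitian)
    (hB : B.PosSemidef) (hAB : LinearMap.range A.mulVecLin ≤ LinearMap.range B.mulVecLin)
    {j : Fin d} (hj : hA.eigenvalues j ≠ 0) :
    ∑ k, (if 0 < hB.1.eigenvalues k then
      ‖⟪hA.eigenvectorBasis j, hB.1.eigenvectorBasis k⟫_ℂ‖ ^ 2 else 0) = 1 := by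
  have hu := hAB (eigenvectorBasis_mem_range hA hj)
  have hterm : ∀ k, (if 0 < hB.1.eigenvalues k then
      ‖⟪hA.eigenvectorBasis j, hB.1.eigenvectorBasis k⟫_ℂ‖ ^ 2 else 0) =
      ‖⟪hA.eigenvectorBasis j, hB.1.eigenvectorBasis k⟫_ℂ‖ ^ 2 := fun k => by
    refine ite_eq_left_iff.mpr fun hk => ?_
    have hk0 : hB.1.eigenvalues k = 0 := le_antisymm (not_lt.mp hk) (hB.eigenvalues_nonneg k)
    have hker : B *ᵥ ⇑(hB.1.eigenvectorBasis k) = 0 := by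
      rw [hB.1.mulVec_eigenvectorBasis, hk0, zero_smul]
    rw [inner_eq_zero_of_mem_range hB.1 hu hker, norm_zero, sq, zero_mul]
  simp only [hterm, OrthonormalBasis.sum_sq_norm_inner_left, hA.eigenvectorBasis.orthonormal.1 j,
    one_pow]

lemma sum_sum_ite_mul_eq_sum {ι κ : Type*} [Fintype ι] [Fintype κ] {η : ι → ℝ} {μ : κ → ℝ}
    {c : ι → κ → ℝ} (hη : ∀ j, 0 ≤ η j)
    (hc : ∀ j, 0 < η j → ∑ k, (if 0 < μ k then c j k else 0) = 1) :
    ∑ j, ∑ k, (if 0 < η j ∧ 0 < μ k then η j * c j k else 0) = ∑ j, η j := by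
  refine Finset.sum_congr rfl fun j _ => ?_
  rcases (hη j).lt_or_eq with hj | hj
  · simpa [hj, Finset.mul_sum, mul_ite] using congrArg (η j * ·) (hc j hj)
  · simp [← hj]

lemma sum_eigenvalues_eq_one {A : Matrix (Fin d) (Fin d) ℂ} (hA : A.IsHermitian)
    (htr : A.trace = 1) : ∑ j, hA.eigenvalues j = 1 := by
  have := hA.trace_eq_sum_eigenvalues
  rw [htr] at this
  exact Complex.ofReal_injective (by simpa using this.symm)

section Linearity

variable {ρ σ : Matrix (Fin d) (Fin d) ℂ} (hρ : ρ.IsHermitian) (hσ : σ.IsHermitian)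
  {f g : ℝ → ℝ}

lemma Df_congr (hfg : ∀ x, 0 < x → f x = g x) : Df f hρ hσ = Df g hρ hσ := by
  refine Finset.sum_congr rfl fun j _ => Finset.sum_congr rfl fun k _ => ?_
  split_ifs with h
  · rw [hfg _ (div_pos h.2 h.1)]
  · rfl

lemma Df_add : Df (fun x => f x + g x) hρ hσ = Df f hρ hσ + Df g hρ hσ := by
  simp only [Df, ← Finset.sum_add_distrib]
  refine Finset.sum_congr rfl fun j _ => Finset.sum_congr rfl fun k _ => ?_
  split_ifs <;> ring

lemma Df_sub : Df (fun x => f x - g x) hρ hσ = Df f hρ hσ - Df g hρ hσ := by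
  simp only [Df, ← Finset.sum_sub_distrib]
  refine Finset.sum_congr rfl fun j _ => Finset.sum_congr rfl fun k _ => ?_
  split_ifs <;> ring

lemma Df_const_mul (a : ℝ) : Df (fun x => a * f x) hρ hσ = a * Df f hρ hσ := by
  simp only [Df, Finset.mul_sum]
  refine Finset.sum_congr rfl fun j _ => Finset.sum_congr rfl fun k _ => ?_
  split_ifs <;> ring

lemma Df_sum {ι : Type*} (s : Finset ι) (F : ι → ℝ → ℝ) :
    Df (fun x => ∑ i ∈ s, F i x) hρ hσ = ∑ i ∈ s, Df (F i) hρ hσ := by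
  induction s using Finset.cons_induction with
  | empty => simp [Df]
  | cons i s hi ih => simp only [Finset.sum_cons, Df_add, ih]

lemma abs_Df_le (hfg : ∀ x, 0 < x → |f x| ≤ g x) : |Df f hρ hσ| ≤ Df g hρ hσ := by
  refine (Finset.abs_sum_le_sum_abs _ _).trans <| Finset.sum_le_sum fun j _ =>
    (Finset.abs_sum_le_sum_abs _ _).trans <| Finset.sum_le_sum fun k _ => ?_
  split_ifs with h
  · rw [abs_mul, abs_mul, abs_of_pos h.1, re_trace_rankOne_mul, abs_sq]
    gcongr
    · exact h.1.le
    · exact hfg _ (div_pos h.2 h.1)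
  · simp

lemma re_trace_matFun_mul_matFun_eq_Df {h : ℝ → ℝ}
    (hgh : ∀ x, 0 < x → ∀ y, 0 < y → g x * h y = x * f (y / x)) :
    (trace (matFun g hρ * matFun h hσ)).re = Df f hρ hσ := by
  simp only [matFun, Finset.sum_mul_sum, smul_mul_smul_comm, trace_sum, trace_smul,
    trace_rankOne_mul, Complex.re_sum, Df]
  refine Finset.sum_congr rfl fun j _ => Finset.sum_congr rfl fun k _ => ?_
  split_ifs with h₁ h₂ h₂ <;> simp_all [← Complex.ofReal_mul]

lemma Qalpha_eq_Df (α : ℝ) : Qalpha α hρ hσ = Df (fun x => x ^ (1 - α)) hρ hσ := by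
  refine re_trace_matFun_mul_matFun_eq_Df hρ hσ fun x hx y hy => ?_
  rw [Real.div_rpow hy.le hx.le, mul_div_assoc', eq_div_iff (Real.rpow_pos_of_pos hx _).ne',
    mul_right_comm, ← Real.rpow_add hx, add_sub_cancel, Real.rpow_one]

lemma Qtwo_eq_Df (hρ : ρ.PosSemidef) : Qtwo ρ hσ = Df (fun x => x⁻¹) hρ.1 hσ := by
  rw [Qtwo, mul_self_eq_matFun_sq hρ]
  refine re_trace_matFun_mul_matFun_eq_Df hρ.1 hσ fun x hx y hy => ?_
  field_simp

end Linearity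

section Divergence

variable {ρ σ : Matrix (Fin d) (Fin d) ℂ}

lemma Df_one (hρ : IsState ρ) (hσ : σ.PosSemidef)
    (hρσ : LinearMap.range ρ.mulVecLin ≤ LinearMap.range σ.mulVecLin) :
    Df (fun _ => 1) hρ.1.1 hσ.1 = 1 := by
  simp only [Df, mul_one, re_trace_rankOne_mul]
  rw [sum_sum_ite_mul_eq_sum hρ.1.eigenvalues_nonneg
    (fun j hj => sum_ite_norm_inner_sq_eq_one hρ.1.1 hσ hρσ hj.ne'),
    sum_eigenvalues_eq_one hρ.1.1 hρ.2]

lemma Df_id (hρ : ρ.PosSemidef) (hσ : IsState σ)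
    (hσρ : LinearMap.range σ.mulVecLin ≤ LinearMap.range ρ.mulVecLin) :
    Df (fun x => x) hρ.1 hσ.1.1 = 1 := by
  have hterm : ∀ j k, (if 0 < hρ.1.eigenvalues j ∧ 0 < hσ.1.1.eigenvalues k then
      hρ.1.eigenvalues j * (hσ.1.1.eigenvalues k / hρ.1.eigenvalues j) *
        (trace (rankOne (hρ.1.eigenvectorBasis j) * rankOne (hσ.1.1.eigenvectorBasis k))).re
      else 0) = if 0 < hσ.1.1.eigenvalues k ∧ 0 < hρ.1.eigenvalues j then
      hσ.1.1.eigenvalues k * ‖⟪hσ.1.1.eigenvectorBasis k, hρ.1.eigenvectorBasis j⟫_ℂ‖ ^ 2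
      else 0 := fun j k => by
    by_cases h : 0 < hρ.1.eigenvalues j ∧ 0 < hσ.1.1.eigenvalues k
    · rw [if_pos h, if_pos h.symm, re_trace_rankOne_mul, norm_inner_symm,
        mul_div_cancel₀ _ h.1.ne']
    · rw [if_neg h, if_neg (mt And.symm h)]
  simp only [Df, hterm]
  rw [Finset.sum_comm, sum_sum_ite_mul_eq_sum hσ.1.eigenvalues_nonneg
    (fun k hk => sum_ite_norm_inner_sq_eq_one hσ.1.1 hρ hσρ hk.ne'),
    sum_eigenvalues_eq_one hσ.1.1 hσ.2]

lemma Df_sub_one_sq_div_eq (hρ : IsState ρ) (hσ : IsState σ)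
    (hsupp : LinearMap.range ρ.mulVecLin = LinearMap.range σ.mulVecLin) :
    Df (fun x => (x - 1) ^ 2 / x) hρ.1.1 hσ.1.1 = Qtwo ρ hσ.1.1 - 1 := by
  rw [Df_congr hρ.1.1 hσ.1.1 (g := fun x => x + x⁻¹ - 2 * 1) fun x hx => by field_simp; ring,
    Df_sub, Df_add, Df_const_mul, Df_id hρ.1 hσ hsupp.ge, Df_one hρ hσ.1 hsupp.le,
    ← Qtwo_eq_Df hσ.1.1 hρ.1]
  ring

end Divergence

theorem quadrature_error_Qalpha_general (α : ℝ)
    (hα : α ∈ Set.Ioo (0 : ℝ) 1 ∪ Set.Ioo (1 : ℝ) 2)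
    (ρ σ : Matrix (Fin d) (Fin d) ℂ) (hρ : IsState ρ) (hσ : IsState σ)
    (hsupp : LinearMap.range ρ.mulVecLin = LinearMap.range σ.mulVecLin)
    (ν : ℝ)
    (m : ℕ) (t w : Fin m → ℝ)
    (happrox : ∀ x > (0 : ℝ),
      |x ^ (1 - α) -
          (1 + (Real.sin (α * Real.pi) / Real.pi) * ∑ j, w j * ft (t j) x)| ≤
        |1 - α| * α * ν * (x - 1) ^ 2 / x) :
    |Qalpha α hρ.1.1 hσ.1.1 -
        (1 + (Real.sin (α * Real.pi) / Real.pi) *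
          ∑ j, w j * Df (ft (t j)) hρ.1.1 hσ.1.1)| ≤
      |α * (1 - α)| * ν * (Qtwo ρ hσ.1.1 - 1) := by
  set s := Real.sin (α * Real.pi) / Real.pi
  have hα₀ : 0 < α := hα.elim (·.1) fun h => one_pos.trans h.1
  have hquad : 1 + s * ∑ j, w j * Df (ft (t j)) hρ.1.1 hσ.1.1 =
      Df (fun x => 1 + s * ∑ j, w j * ft (t j) x) hρ.1.1 hσ.1.1 := by
    simp only [Df_add, Df_const_mul, Df_sum, Df_one hρ hσ.1 hsupp.le]
  have hbound : Df (fun x => |1 - α| * α * ν * (x - 1) ^ 2 / x) hρ.1.1 hσ.1.1 =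
      |α * (1 - α)| * ν * (Qtwo ρ hσ.1.1 - 1) := by
    simp only [mul_div_assoc, Df_const_mul, Df_sub_one_sq_div_eq hρ hσ hsupp]
    rw [abs_mul, abs_of_pos hα₀]
    ring
  rw [Qalpha_eq_Df, hquad, ← Df_sub, ← hbound]
  exact abs_Df_le _ _ happrox

/-- Quadrature error bound for the quasi-relative entropy:
`|Q_α(ρ‖σ) − D_{h_m}(ρ‖σ)| ≤ |α(1−α)| ν (Q₂(ρ‖σ) − 1)`. -/
theorem quadrature_error_Qalpha (α : ℝ)
    (hα : α ∈ Set.Ioo (0 : ℝ) 1 ∪ Set.Ioo (1 : ℝ) 2)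
    (ρ σ : Matrix (Fin d) (Fin d) ℂ) (hρ : IsState ρ) (hσ : IsState σ)
    (hsupp : LinearMap.range ρ.mulVecLin = LinearMap.range σ.mulVecLin)
    (ν : ℝ) (hν : 0 < ν)
    (m : ℕ) (hm : 1 ≤ m) (t w : Fin m → ℝ)
    (ht : ∀ j, t j ∈ Set.Icc (0 : ℝ) 1) (hw : ∀ j, 0 < w j)
    (happrox : ∀ x > (0 : ℝ),
      |x ^ (1 - α) -
          (1 + (Real.sin (α * Real.pi) / Real.pi) * ∑ j, w j * ft (t j) x)| ≤
        |1 - α| * α * ν * (x - 1) ^ 2 / x) :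
    |Qalpha α hρ.1.1 hσ.1.1 -
        (1 + (Real.sin (α * Real.pi) / Real.pi) *
          ∑ j, w j * Df (ft (t j)) hρ.1.1 hσ.1.1)| ≤
      |α * (1 - α)| * ν * (Qtwo ρ hσ.1.1 - 1) :=
  quadrature_error_Qalpha_general α hα ρ σ hρ hσ hsupp ν m t w happrox

end QRE
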